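/- Combining: if u(x̂) - u(x) ≥ (1 - e^{-c̲ t}) P_x(τ_D > t) u(x̂) for all t > 0, and P_x(τ_D > t) ≥ e^{-λ t} φ(x)/‖φ‖_∞, then u(x̂) - u(x) ≥ u(x̂) φ(x)/(e ‖φ‖_∞) · c̲/(λ + c̲). -/

import Mathlib

/-!
Evaluate both bounds at `t = 1 / (λ + c)`. Since `1 + s ≤ eˢ`, the gain factor satisfies
`1 - e^{-ct} ≥ ct e^{-ct}`, and at this `t` the exponentials combine to
`ct e^{-ct} e^{-λt} = c / (λ + c) · e⁻¹`.
-/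

open Real

lemma mul_exp_neg_le_one_sub_exp_neg (s : ℝ) : s * exp (-s) ≤ 1 - exp (-s) := by
  have h : (1 + s) * exp (-s) ≤ exp s * exp (-s) :=
    mul_le_mul_of_nonneg_right (by linarith [add_one_le_exp s]) (exp_pos _).le
  rw [← exp_add, add_neg_cancel, exp_zero] at h
  linarith

lemma mul_exp_neg_add_le_one_sub_exp_neg_mul_exp_neg (c lam t : ℝ) :
    c * t * exp (-((lam + c) * t)) ≤ (1 - exp (-(c * t))) * exp (-(lam * t)) := by
  have h := mul_le_mul_of_nonneg_right (mul_exp_neg_le_one_sub_exp_neg (c * t))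
    (exp_pos (-(lam * t))).le
  calc c * t * exp (-((lam + c) * t)) = c * t * exp (-(c * t)) * exp (-(lam * t)) := by
        rw [mul_assoc (c * t), ← exp_add]; ring_nf
    _ ≤ _ := h

lemma div_mul_exp_neg_one_le_one_sub_exp_neg_mul_exp_neg {c lam : ℝ} (hsum : lam + c ≠ 0) :
    c / (lam + c) * exp (-1) ≤
      (1 - exp (-(c * (lam + c)⁻¹))) * exp (-(lam * (lam + c)⁻¹)) := by
  have h := mul_exp_neg_add_le_one_sub_exp_neg_mul_exp_neg c lam (lam + c)⁻¹
  rwa [mul_inv_cancel₀ hsum, ← div_eq_mul_inv] at h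

/-- Combining the two lower bounds: if u(x̂)-u(x) ≥ (1-e^{-c̲t}) P_x(τ_D>t) u(x̂)
for all t > 0 and P_x(τ_D>t) ≥ e^{-λt} φ(x)/‖φ‖_∞, then
u(x̂)-u(x) ≥ u(x̂) φ(x)/(e‖φ‖_∞) · c̲/(λ+c̲). -/
theorem stmt10 (c lam uhat phix Mphi Δ : ℝ) (p : ℝ → ℝ)
    (hc : 0 < c) (hlam : 0 < lam) (huhat : 0 ≤ uhat) (hphix : 0 ≤ phix)
    (hMphi : 0 < Mphi)
    (h1 : ∀ t : ℝ, 0 < t → (1 - Real.exp (-(c * t))) * p t * uhat ≤ Δ)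
    (h2 : ∀ t : ℝ, 0 < t → Real.exp (-(lam * t)) * phix / Mphi ≤ p t) :
    uhat * phix / (Real.exp 1 * Mphi) * (c / (lam + c)) ≤ Δ := by
  have hsum : 0 < lam + c := by linarith
  set t := (lam + c)⁻¹
  have ht : 0 < t := inv_pos.2 hsum
  have hgain : 0 ≤ 1 - exp (-(c * t)) :=
    sub_nonneg.2 (exp_le_one_iff.2 (neg_nonpos.2 (mul_pos hc ht).le))
  calc uhat * phix / (exp 1 * Mphi) * (c / (lam + c))
      = c / (lam + c) * exp (-1) * (phix / Mphi) * uhat := by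
        rw [exp_neg]; field_simp
    _ ≤ (1 - exp (-(c * t))) * exp (-(lam * t)) * (phix / Mphi) * uhat := by
        gcongr ?_ * _ * _
        exact div_mul_exp_neg_one_le_one_sub_exp_neg_mul_exp_neg hsum.ne'
    _ = (1 - exp (-(c * t))) * (exp (-(lam * t)) * phix / Mphi) * uhat := by ring
    _ ≤ (1 - exp (-(c * t))) * p t * uhat := by gcongr; exact h2 t ht
    _ ≤ Δ := h1 t ht
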